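/- Let K be a lazy, reversible Markov kernel with respect to π, conductance φ, and assume the initial distribution ν has a bounded density dν/dπ with respect to π. Then for every measurable A and j ∈ ℕ, |∫_Ω K^j(x,A) ν(dx) − π(A)| ≤ ‖dν/dπ‖_∞^{1/2} · (1 − φ²/2)^j. -/

import Mathlib

open MeasureTheory ProbabilityTheory

def Reversible {Ω : Type*} [MeasurableSpace Ω] (K : Kernel Ω Ω) (π : Measure Ω) : Prop :=
  ∀ A B : Set Ω, MeasurableSet A → MeasurableSet B →
    ∫⁻ x in B, K x A ∂π = ∫⁻ x in A, K x B ∂π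

def Lazy {Ω : Type*} [MeasurableSpace Ω] (K : Kernel Ω Ω) : Prop :=
  ∀ x : Ω, (1 : ENNReal) / 2 ≤ K x {x}

noncomputable def conductance {Ω : Type*} [MeasurableSpace Ω] (K : Kernel Ω Ω)
    (π : Measure Ω) : ℝ :=
  sInf {r : ℝ | ∃ A : Set Ω, MeasurableSet A ∧ 0 < π A ∧ π A ≤ 1 / 2 ∧
    r = (∫⁻ x in A, K x Aᶜ ∂π).toReal / (π A).toReal}

/-- The `j`-step transition kernel. -/
noncomputable def Kpow {Ω : Type*} [MeasurableSpace Ω] (K : Kernel Ω Ω) : ℕ → Kernel Ω Ω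
  | 0 => Kernel.id
  | n + 1 => (Kpow K n) ∘ₖ K

/-!
Write `P = markovOp K`, so that `P f x = ∫ f dK(x)`, and `λ = 1 - φ² / 2`. Reversibility makes `P`
self-adjoint on `L²(π)` with `π` invariant; laziness makes it positive semidefinite,
`‖P f‖² ≤ ⟨P f, f⟩`, because `2 K - id` is again a Markov kernel. For `f` of mean zero, cutting `f`
at a median and applying the co-area form of Cheeger's inequality to both halves gives
`⟨P f, f⟩ ≤ λ ‖f‖²`; Cauchy–Schwarz for the positive form `⟨P ·, ·⟩` upgrades this to
`‖P f‖ ≤ λ ‖f‖`. With `ρ = dν/dπ`,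
`∫ K^j(x, A) ν(dx) - π(A) = ⟨P^j (ρ - 1), 1_A⟩ ≤ λ^j ‖ρ - 1‖ ≤ λ^j ‖ρ‖_∞^{1/2}`.
-/

open Set Filter

lemma sq_le_mul_of_forall_quadratic_nonneg {a b c : ℝ}
    (h : ∀ t : ℝ, 0 ≤ a + 2 * b * t + c * t ^ 2) : b ^ 2 ≤ a * c := by
  have := discrim_le_zero (a := c) (b := 2 * b) (c := a) fun t => by linarith [h t]
  rw [discrim] at this
  linarith

lemma abs_eq_posPart_add_posPart_neg (a : ℝ) : |a| = a⁺ + (-a)⁺ := by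
  rcases le_total 0 a with h | h
  · simp [abs_of_nonneg h, posPart_eq_self.2 h, posPart_eq_zero.2 (neg_nonpos.2 h)]
  · simp [abs_of_nonpos h, posPart_eq_zero.2 h, posPart_eq_self.2 (neg_nonneg.2 h)]

lemma sq_posPart_sub_add_sq_posPart_sub (a c : ℝ) :
    (a - c)⁺ ^ 2 + (c - a)⁺ ^ 2 = (a - c) ^ 2 := by
  rcases le_total a c with h | h
  · rw [posPart_eq_zero.2 (sub_nonpos.2 h), posPart_eq_self.2 (sub_nonneg.2 h)]
    ring
  · rw [posPart_eq_self.2 (sub_nonneg.2 h), posPart_eq_zero.2 (sub_nonpos.2 h)]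
    ring

lemma sq_posPart_sub_posPart_add_le (a b c : ℝ) :
    ((a - c)⁺ - (b - c)⁺) ^ 2 + ((c - a)⁺ - (c - b)⁺) ^ 2 ≤ (a - b) ^ 2 := by
  rcases le_total a c with ha | ha <;> rcases le_total b c with hb | hb <;>
  simp only [posPart_eq_zero.2 (sub_nonpos.2 ha), posPart_eq_self.2 (sub_nonneg.2 ha),
    posPart_eq_zero.2 (sub_nonpos.2 hb), posPart_eq_self.2 (sub_nonneg.2 hb)] <;>
  nlinarith

lemma exists_median (μ : Measure ℝ) [IsProbabilityMeasure μ] :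
    ∃ c, μ (Ioi c) ≤ 1 / 2 ∧ μ (Iio c) ≤ 1 / 2 := by
  set F := cdf μ
  set S := {t | 1 / 2 ≤ F t}
  have hS : S.Nonempty :=
    ((tendsto_cdf_atTop μ).eventually (le_mem_nhds (by norm_num))).exists
  obtain ⟨b, hb⟩ := eventually_atBot.1
    ((tendsto_cdf_atBot μ).eventually (gt_mem_nhds (by norm_num : (0 : ℝ) < 1 / 2)))
  have hbdd : BddBelow S := ⟨b, fun t ht => not_lt.1 fun htb => (hb t htb.le).not_ge ht⟩
  refine ⟨sInf S, ?_, ?_⟩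
  · have hc : 1 / 2 ≤ F (sInf S) := by
      refine ge_of_tendsto ((F.right_continuous _).mono Ioi_subset_Ici_self) ?_
      filter_upwards [self_mem_nhdsWithin] with t ht
      obtain ⟨s, hs, hst⟩ := exists_lt_of_csInf_lt hS ht
      exact hs.trans (F.mono hst.le)
    rw [← measure_cdf μ, F.measure_Ioi (tendsto_cdf_atTop μ)]
    exact ENNReal.ofReal_le_of_le_toReal (by norm_num; linarith)
  · have hc : Function.leftLim F (sInf S) ≤ 1 / 2 := by
      refine le_of_tendsto (F.mono.tendsto_leftLim _) ?_
      filter_upwards [self_mem_nhdsWithin] with t ht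
      exact le_of_lt (not_le.1 fun hS' => (csInf_le hbdd hS').not_gt ht)
    rw [← measure_cdf μ, F.measure_Iio (tendsto_cdf_atBot μ)]
    exact ENNReal.ofReal_le_of_le_toReal (by norm_num; linarith)

/-- Working with bounded measurable functions rather than `L²(π)` makes every integral below
finite, against each of the finite measures `π`, `K x` and `π ⊗ₘ K`. -/
@[fun_prop]
structure BoundedMeasurable {Ω : Type*} [MeasurableSpace Ω] (f : Ω → ℝ) : Prop where
  measurable : Measurable f
  exists_bound : ∃ C, ∀ x, |f x| ≤ C

namespace BoundedMeasurable

variable {Ω Ω' : Type*} [MeasurableSpace Ω] [MeasurableSpace Ω'] {f g : Ω → ℝ}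

@[fun_prop]
lemma const (c : ℝ) : BoundedMeasurable fun _ : Ω => c :=
  ⟨measurable_const, |c|, fun _ => le_rfl⟩

@[fun_prop]
lemma add (hf : BoundedMeasurable f) (hg : BoundedMeasurable g) :
    BoundedMeasurable fun x => f x + g x := by
  obtain ⟨C, hC⟩ := hf.exists_bound
  obtain ⟨D, hD⟩ := hg.exists_bound
  exact ⟨hf.measurable.add hg.measurable, C + D,
    fun x => (abs_add_le _ _).trans (add_le_add (hC x) (hD x))⟩

@[fun_prop]
lemma neg (hf : BoundedMeasurable f) : BoundedMeasurable fun x => -f x := by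
  obtain ⟨C, hC⟩ := hf.exists_bound
  exact ⟨hf.measurable.neg, C, fun x => (abs_neg (f x)).trans_le (hC x)⟩

@[fun_prop]
lemma sub (hf : BoundedMeasurable f) (hg : BoundedMeasurable g) :
    BoundedMeasurable fun x => f x - g x := by
  simpa only [sub_eq_add_neg] using hf.add hg.neg

@[fun_prop]
lemma mul (hf : BoundedMeasurable f) (hg : BoundedMeasurable g) :
    BoundedMeasurable fun x => f x * g x := by
  obtain ⟨C, hC⟩ := hf.exists_bound
  obtain ⟨D, hD⟩ := hg.exists_bound
  refine ⟨hf.measurable.mul hg.measurable, C * D, fun x => ?_⟩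
  rw [abs_mul]
  exact mul_le_mul (hC x) (hD x) (abs_nonneg _) ((abs_nonneg _).trans (hC x))

@[fun_prop]
lemma pow_two (hf : BoundedMeasurable f) : BoundedMeasurable fun x => f x ^ 2 := by
  simpa only [sq] using hf.mul hf

@[fun_prop]
lemma abs (hf : BoundedMeasurable f) : BoundedMeasurable fun x => |f x| := by
  obtain ⟨C, hC⟩ := hf.exists_bound
  exact ⟨hf.measurable.abs, C, fun x => (abs_abs (f x)).trans_le (hC x)⟩

@[fun_prop]
lemma posPart (hf : BoundedMeasurable f) : BoundedMeasurable fun x => (f x)⁺ := by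
  obtain ⟨C, hC⟩ := hf.exists_bound
  refine ⟨hf.measurable.max measurable_const, C, fun x => ?_⟩
  rw [abs_of_nonneg (posPart_nonneg _)]
  exact (sup_le (le_abs_self _) (abs_nonneg _)).trans (hC x)

@[fun_prop]
lemma comp_measurable (hf : BoundedMeasurable f) {u : Ω' → Ω} (hu : Measurable u) :
    BoundedMeasurable fun x => f (u x) := by
  obtain ⟨C, hC⟩ := hf.exists_bound
  exact ⟨hf.measurable.comp hu, C, fun x => hC (u x)⟩

lemma indicator_one {A : Set Ω} (hA : MeasurableSet A) :
    BoundedMeasurable (A.indicator 1) := by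
  refine ⟨measurable_const.indicator hA, 1, fun x => ?_⟩
  by_cases hx : x ∈ A <;> simp [hx]

lemma integrable (hf : BoundedMeasurable f) {μ : Measure Ω} [IsFiniteMeasure μ] :
    Integrable f μ := by
  obtain ⟨C, hC⟩ := hf.exists_bound
  exact .of_bound hf.measurable.aestronglyMeasurable C (.of_forall fun x => by simpa using hC x)

end BoundedMeasurable

lemma sq_integral_mul_le {Ω : Type*} [MeasurableSpace Ω] (μ : Measure Ω) [IsFiniteMeasure μ]
    {f g : Ω → ℝ} (hf : BoundedMeasurable f) (hg : BoundedMeasurable g) :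
    (∫ x, f x * g x ∂μ) ^ 2 ≤ (∫ x, f x ^ 2 ∂μ) * ∫ x, g x ^ 2 ∂μ := by
  refine sq_le_mul_of_forall_quadratic_nonneg fun t => ?_
  have hexp : ∀ x, (f x + t * g x) ^ 2 = f x ^ 2 + 2 * t * (f x * g x) + t ^ 2 * g x ^ 2 :=
    fun x => by ring
  have : 0 ≤ ∫ x, (f x + t * g x) ^ 2 ∂μ := integral_nonneg fun x => sq_nonneg _
  simp (disch := exact BoundedMeasurable.integrable (by fun_prop)) only
    [hexp, integral_add, integral_const_mul] at this
  linarith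

noncomputable def markovOp {Ω : Type*} [MeasurableSpace Ω] (K : Kernel Ω Ω) (f : Ω → ℝ)
    (x : Ω) : ℝ :=
  ∫ y, f y ∂K x

section MarkovOp

variable {Ω : Type*} [MeasurableSpace Ω] {K : Kernel Ω Ω} [IsMarkovKernel K] {f g : Ω → ℝ}

@[fun_prop]
lemma BoundedMeasurable.markovOp (hf : BoundedMeasurable f) :
    BoundedMeasurable (markovOp K f) := by
  obtain ⟨C, hC⟩ := hf.exists_bound
  refine ⟨(StronglyMeasurable.integral_kernel_prod_right'
    (hf.measurable.comp measurable_snd).stronglyMeasurable).measurable, C, fun x => ?_⟩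
  have := norm_integral_le_of_norm_le_const (μ := K x) (f := f)
    (.of_forall fun y => by simpa using hC y)
  rwa [Real.norm_eq_abs, probReal_univ, mul_one] at this

lemma BoundedMeasurable.iterate_markovOp (hf : BoundedMeasurable f) (n : ℕ) :
    BoundedMeasurable ((_root_.markovOp K)^[n] f) := by
  induction n with
  | zero => exact hf
  | succ n ih => rw [Function.iterate_succ_apply']; exact ih.markovOp

@[simp]
lemma markovOp_const (c : ℝ) : markovOp K (fun _ => c) = fun _ => c := by
  ext x
  simp [markovOp]

lemma markovOp_add_const_mul (hf : BoundedMeasurable f) (hg : BoundedMeasurable g) (t : ℝ) :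
    markovOp K (fun x => f x + t * g x) = fun x => markovOp K f x + t * markovOp K g x := by
  ext x
  simp (disch := exact BoundedMeasurable.integrable (by fun_prop)) only
    [markovOp, integral_add, integral_const_mul]

variable {π : Measure Ω} [IsFiniteMeasure π]

lemma integral_compProd_mul (hf : BoundedMeasurable f) (hg : BoundedMeasurable g) :
    ∫ p, f p.1 * g p.2 ∂(π ⊗ₘ K) = ∫ x, f x * markovOp K g x ∂π := by
  rw [Measure.integral_compProd (BoundedMeasurable.integrable (by fun_prop))]
  simp only [markovOp, integral_const_mul]

lemma integral_compProd_fst (hf : BoundedMeasurable f) :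
    ∫ p, f p.1 ∂(π ⊗ₘ K) = ∫ x, f x ∂π := by
  simpa using integral_compProd_mul (K := K) (π := π) hf (.const 1)

lemma Reversible.map_swap_compProd (hrev : Reversible K π) :
    (π ⊗ₘ K).map Prod.swap = π ⊗ₘ K := by
  refine ext_of_generate_finite _ generateFrom_prod.symm isPiSystem_prod ?_
    (by rw [Measure.map_apply measurable_swap .univ]; simp)
  rintro _ ⟨A, hA, B, hB, rfl⟩
  rw [Measure.map_apply measurable_swap (hA.prod hB), preimage_swap_prod,
    Measure.compProd_apply_prod hB hA, Measure.compProd_apply_prod hA hB]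
  exact (hrev B A hB hA).symm

lemma Reversible.integral_comp_swap (hrev : Reversible K π) (F : Ω × Ω → ℝ) :
    ∫ p, F p.swap ∂(π ⊗ₘ K) = ∫ p, F p ∂(π ⊗ₘ K) := by
  conv_rhs => rw [← hrev.map_swap_compProd]
  exact (integral_map_equiv MeasurableEquiv.prodComm F).symm

lemma Reversible.integral_markovOp_mul (hrev : Reversible K π) (hf : BoundedMeasurable f)
    (hg : BoundedMeasurable g) :
    ∫ x, markovOp K f x * g x ∂π = ∫ x, f x * markovOp K g x ∂π := by
  calc ∫ x, markovOp K f x * g x ∂π = ∫ p, g p.1 * f p.2 ∂(π ⊗ₘ K) := by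
        rw [integral_compProd_mul hg hf]
        simp only [mul_comm]
    _ = ∫ p, f p.1 * g p.2 ∂(π ⊗ₘ K) := by
        rw [← hrev.integral_comp_swap]
        simp only [Prod.fst_swap, Prod.snd_swap, mul_comm]
    _ = ∫ x, f x * markovOp K g x ∂π := integral_compProd_mul hf hg

lemma Reversible.integral_markovOp (hrev : Reversible K π) (hf : BoundedMeasurable f) :
    ∫ x, markovOp K f x ∂π = ∫ x, f x ∂π := by
  simpa using hrev.integral_markovOp_mul hf (.const 1)

lemma Reversible.integral_compProd_snd (hrev : Reversible K π) (hf : BoundedMeasurable f) :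
    ∫ p, f p.2 ∂(π ⊗ₘ K) = ∫ x, f x ∂π := by
  rw [← hrev.integral_comp_swap]
  exact integral_compProd_fst hf

lemma Reversible.integral_sq_sub (hrev : Reversible K π) (hf : BoundedMeasurable f) :
    ∫ p, (f p.1 - f p.2) ^ 2 ∂(π ⊗ₘ K)
      = 2 * ∫ x, f x ^ 2 ∂π - 2 * ∫ x, markovOp K f x * f x ∂π := by
  have hexp : ∀ p : Ω × Ω, (f p.1 - f p.2) ^ 2 = f p.1 ^ 2 + f p.2 ^ 2 - 2 * (f p.1 * f p.2) :=
    fun p => by ring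
  simp (disch := exact BoundedMeasurable.integrable (by fun_prop)) only
    [hexp, integral_add, integral_sub, integral_const_mul]
  rw [integral_compProd_fst (f := fun x => f x ^ 2) (by fun_prop),
    hrev.integral_compProd_snd (f := fun x => f x ^ 2) (by fun_prop),
    integral_compProd_mul hf hf, hrev.integral_markovOp_mul hf hf]
  ring

lemma Reversible.integral_iterate_markovOp (hrev : Reversible K π) (hf : BoundedMeasurable f)
    (n : ℕ) : ∫ x, (markovOp K)^[n] f x ∂π = ∫ x, f x ∂π := by
  induction n with
  | zero => rfl
  | succ n ih =>
    rw [Function.iterate_succ_apply', hrev.integral_markovOp (hf.iterate_markovOp n), ih]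

lemma Reversible.integral_iterate_markovOp_mul (hrev : Reversible K π)
    (hf : BoundedMeasurable f) (hg : BoundedMeasurable g) (n : ℕ) :
    ∫ x, (markovOp K)^[n] f x * g x ∂π = ∫ x, f x * (markovOp K)^[n] g x ∂π := by
  induction n generalizing g with
  | zero => rfl
  | succ n ih =>
    rw [Function.iterate_succ_apply', hrev.integral_markovOp_mul (hf.iterate_markovOp n) hg,
      ih hg.markovOp, Function.iterate_succ_apply]

lemma Reversible.integral_mul_iterate_markovOp_sub (hrev : Reversible K π) {ρ : Ω → ℝ}
    (hρ : BoundedMeasurable ρ) (hf : BoundedMeasurable f) (n : ℕ) :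
    ∫ x, ρ x * (markovOp K)^[n] f x ∂π - ∫ x, f x ∂π
      = ∫ x, (markovOp K)^[n] (fun y => ρ y - 1) x * f x ∂π := by
  rw [hrev.integral_iterate_markovOp_mul (hρ.sub (.const 1)) hf,
    ← hrev.integral_iterate_markovOp hf n,
    ← integral_sub (hρ.mul (hf.iterate_markovOp n)).integrable (hf.iterate_markovOp n).integrable]
  simp only [sub_mul, one_mul]

end MarkovOp

section Lazy

variable {Ω : Type*} [MeasurableSpace Ω] {K : Kernel Ω Ω} [IsMarkovKernel K] {f g : Ω → ℝ}

lemma Lazy.two_mul_sq_integral_le (hK : Lazy K) {h : Ω → ℝ} (hh : BoundedMeasurable h) {x : Ω}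
    (hx : h x = 0) : 2 * (∫ y, h y ∂K x) ^ 2 ≤ ∫ y, h y ^ 2 ∂K x := by
  -- `h` lives on `{h ≠ 0}`, which misses the atom `x` and so has `K x`-mass at most `1/2`.
  set s := {y | h y ≠ 0}
  have hs : MeasurableSet s := hh.measurable (measurableSet_singleton 0).compl
  have hKs : (K x).real s ≤ 1 / 2 := by
    have hx' : (K x).real {x} ≤ (K x).real sᶜ := measureReal_mono (by simpa [s] using hx)
    have hhalf : 1 / 2 ≤ (K x).real {x} := by
      simpa [measureReal_def] using ENNReal.toReal_mono (measure_ne_top _ _) (hK x)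
    rw [probReal_compl_eq_one_sub hs] at hx'
    linarith
  have hcs := sq_integral_mul_le (K x) hh (.indicator_one hs)
  have hhs : ∀ y, h y * s.indicator 1 y = h y := fun y => by
    by_cases hy : h y = 0 <;> simp [s, hy]
  have hss : ∀ y, s.indicator (1 : Ω → ℝ) y ^ 2 = s.indicator 1 y := fun y => by
    by_cases hy : y ∈ s <;> simp [hy]
  simp only [hhs, hss, integral_indicator_one hs] at hcs
  have hsq : 0 ≤ ∫ y, h y ^ 2 ∂K x := integral_nonneg fun y => sq_nonneg _
  nlinarith

lemma Lazy.sq_two_mul_markovOp_sub_le (hK : Lazy K) (hf : BoundedMeasurable f) (x : Ω) :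
    (2 * markovOp K f x - f x) ^ 2 ≤ 2 * markovOp K (fun y => f y ^ 2) x - f x ^ 2 := by
  have h := hK.two_mul_sq_integral_le (h := fun y => f y - f x) (by fun_prop) (sub_self _)
  have hexp : ∀ y, (f y - f x) ^ 2 = f y ^ 2 - 2 * f x * f y + f x ^ 2 := fun y => by ring
  simp (disch := exact BoundedMeasurable.integrable (by fun_prop)) only
    [hexp, integral_add, integral_sub, integral_const_mul, integral_const, probReal_univ,
      smul_eq_mul, one_mul] at h
  simp only [markovOp]
  nlinarith [h]

variable {π : Measure Ω} [IsFiniteMeasure π]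

lemma Lazy.integral_sq_markovOp_le (hK : Lazy K) (hrev : Reversible K π)
    (hf : BoundedMeasurable f) :
    ∫ x, markovOp K f x ^ 2 ∂π ≤ ∫ x, markovOp K f x * f x ∂π := by
  have h := integral_mono (μ := π) (BoundedMeasurable.integrable (by fun_prop))
    (BoundedMeasurable.integrable (by fun_prop)) (hK.sq_two_mul_markovOp_sub_le hf)
  have hexp : ∀ x, (2 * markovOp K f x - f x) ^ 2
      = 4 * markovOp K f x ^ 2 - 4 * (markovOp K f x * f x) + f x ^ 2 := fun x => by ring
  simp (disch := exact BoundedMeasurable.integrable (by fun_prop)) only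
    [hexp, integral_add, integral_sub, integral_const_mul] at h
  rw [hrev.integral_markovOp (f := fun x => f x ^ 2) (by fun_prop)] at h
  linarith

lemma Lazy.integral_markovOp_mul_self_nonneg (hK : Lazy K) (hrev : Reversible K π)
    (hf : BoundedMeasurable f) : 0 ≤ ∫ x, markovOp K f x * f x ∂π :=
  (integral_nonneg fun _ => sq_nonneg _).trans (hK.integral_sq_markovOp_le hrev hf)

/-- Cauchy–Schwarz for the form `⟨P ·, ·⟩`, which is symmetric by reversibility and positive
semidefinite by laziness. -/
lemma Lazy.sq_integral_markovOp_mul_le (hK : Lazy K) (hrev : Reversible K π)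
    (hf : BoundedMeasurable f) (hg : BoundedMeasurable g) :
    (∫ x, markovOp K f x * g x ∂π) ^ 2
      ≤ (∫ x, markovOp K f x * f x ∂π) * ∫ x, markovOp K g x * g x ∂π := by
  refine sq_le_mul_of_forall_quadratic_nonneg fun t => ?_
  have h := hK.integral_markovOp_mul_self_nonneg hrev (f := fun x => f x + t * g x) (by fun_prop)
  have hexp : ∀ x, (markovOp K f x + t * markovOp K g x) * (f x + t * g x)
      = markovOp K f x * f x + t * (markovOp K f x * g x) + t * (markovOp K g x * f x)
        + t ^ 2 * (markovOp K g x * g x) := fun x => by ring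
  have hsymm : ∫ x, markovOp K g x * f x ∂π = ∫ x, markovOp K f x * g x ∂π := by
    rw [hrev.integral_markovOp_mul hg hf]
    simp only [mul_comm]
  rw [markovOp_add_const_mul hf hg] at h
  simp (disch := exact BoundedMeasurable.integrable (by fun_prop)) only
    [hexp, integral_add, integral_const_mul] at h
  rw [hsymm] at h
  linarith

end Lazy

section Conductance

variable {Ω : Type*} [MeasurableSpace Ω] {K : Kernel Ω Ω} {π : Measure Ω}

lemma conductance_nonneg : 0 ≤ conductance K π :=
  Real.sInf_nonneg fun _ ⟨_, _, _, _, hr⟩ => hr ▸ by positivity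

lemma conductance_le {A : Set Ω} (hA : MeasurableSet A) (hpos : 0 < π A) (hhalf : π A ≤ 1 / 2) :
    conductance K π ≤ (∫⁻ x in A, K x Aᶜ ∂π).toReal / (π A).toReal :=
  csInf_le ⟨0, fun _ ⟨_, _, _, _, hr⟩ => hr ▸ by positivity⟩ ⟨A, hA, hpos, hhalf, rfl⟩

lemma setLIntegral_kernel_le [IsMarkovKernel K] (A B : Set Ω) : ∫⁻ x in A, K x B ∂π ≤ π A :=
  (lintegral_mono fun _ => prob_le_one).trans_eq (by simp)

lemma conductance_le_one [IsMarkovKernel K] [IsFiniteMeasure π] : conductance K π ≤ 1 := by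
  refine (Real.sInf_le_sSup _ ⟨0, ?_⟩ ⟨1, ?_⟩).trans (Real.sSup_le ?_ zero_le_one)
  all_goals rintro _ ⟨A, -, -, -, rfl⟩
  · positivity
  all_goals exact div_le_one_of_le₀ (ENNReal.toReal_mono (measure_ne_top π A)
    (setLIntegral_kernel_le A Aᶜ)) ENNReal.toReal_nonneg

lemma ofReal_conductance_mul_le [IsMarkovKernel K] [IsFiniteMeasure π] {S : Set Ω}
    (hS : MeasurableSet S) (hhalf : π S ≤ 1 / 2) :
    ENNReal.ofReal (conductance K π) * π S ≤ (π ⊗ₘ K) (S ×ˢ Sᶜ) := by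
  rw [Measure.compProd_apply_prod hS hS.compl]
  rcases eq_zero_or_pos (π S) with h | hpos
  · simp [h]
  have hflow : ∫⁻ x in S, K x Sᶜ ∂π ≠ ⊤ := ne_top_of_le_ne_top (measure_ne_top π S)
    (setLIntegral_kernel_le S Sᶜ)
  have h := conductance_le (K := K) hS hpos hhalf
  rw [le_div_iff₀ (ENNReal.toReal_pos hpos.ne' (measure_ne_top π S))] at h
  rw [← ENNReal.ofReal_toReal (measure_ne_top π S), ← ENNReal.ofReal_mul conductance_nonneg,
    ← ENNReal.ofReal_toReal hflow]
  exact ENNReal.ofReal_le_ofReal h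

/-- Both sides are the measure of `{(p, t) | h p.2 < t ≤ h p.1}` for `μ ⊗ Lebesgue` on `t > 0`. -/
lemma lintegral_ofReal_sub_eq (μ : Measure (Ω × Ω)) [SFinite μ] {h : Ω → ℝ} (hh : Measurable h)
    (h0 : ∀ x, 0 ≤ h x) :
    ∫⁻ p, ENNReal.ofReal (h p.1 - h p.2) ∂μ
      = ∫⁻ t in Ioi 0, μ ({x | t ≤ h x} ×ˢ {x | t ≤ h x}ᶜ) := by
  set E : Set ((Ω × Ω) × ℝ) := {q | h q.1.2 < q.2 ∧ q.2 ≤ h q.1.1}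
  have hE : MeasurableSet E :=
    (measurableSet_lt (hh.comp (measurable_snd.comp measurable_fst)) measurable_snd).inter
      (measurableSet_le measurable_snd (hh.comp (measurable_fst.comp measurable_fst)))
  calc ∫⁻ p, ENNReal.ofReal (h p.1 - h p.2) ∂μ = (μ.prod (volume.restrict (Ioi 0))) E := by
        rw [Measure.prod_apply hE]
        refine lintegral_congr fun p => ?_
        have hslice : Prod.mk p ⁻¹' E = Ioc (h p.2) (h p.1) := by
          ext t
          simp [E, and_comm]
        rw [hslice, Measure.restrict_apply measurableSet_Ioc,
          inter_eq_self_of_subset_left (Ioc_subset_Ioi_self.trans (Ioi_subset_Ioi (h0 p.2))),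
          Real.volume_Ioc]
    _ = ∫⁻ t in Ioi 0, μ ({x | t ≤ h x} ×ˢ {x | t ≤ h x}ᶜ) := by
        rw [Measure.prod_apply_symm hE]
        refine lintegral_congr fun t => congrArg μ ?_
        ext p
        simp only [E, mem_preimage, mem_ofPred_eq, mem_prod, mem_compl_iff, not_le]
        tauto

lemma conductance_mul_lintegral_le [IsMarkovKernel K] [IsFiniteMeasure π] {h : Ω → ℝ}
    (hh : Measurable h) (h0 : ∀ x, 0 ≤ h x) (hsupp : π {x | 0 < h x} ≤ 1 / 2) :
    ENNReal.ofReal (conductance K π) * ∫⁻ x, ENNReal.ofReal (h x) ∂π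
      ≤ ∫⁻ p, ENNReal.ofReal (h p.1 - h p.2) ∂(π ⊗ₘ K) := by
  rw [lintegral_eq_lintegral_meas_le π (.of_forall h0) hh.aemeasurable,
    lintegral_ofReal_sub_eq _ hh h0, ← lintegral_const_mul' _ _ ENNReal.ofReal_ne_top]
  refine setLIntegral_mono' measurableSet_Ioi fun t (ht : 0 < t) => ?_
  refine ofReal_conductance_mul_le (measurableSet_le measurable_const hh) ?_
  exact (measure_mono fun x (hx : t ≤ h x) => ht.trans_le hx).trans hsupp

end Conductance

section SpectralGap

variable {Ω : Type*} [MeasurableSpace Ω] {K : Kernel Ω Ω} [IsMarkovKernel K] {π : Measure Ω}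
  {f g : Ω → ℝ}

lemma Reversible.two_mul_conductance_mul_integral_le [IsFiniteMeasure π] (hrev : Reversible K π)
    (hg : BoundedMeasurable g) (g0 : ∀ x, 0 ≤ g x) (hsupp : π {x | 0 < g x} ≤ 1 / 2) :
    2 * conductance K π * ∫ x, g x ∂π ≤ ∫ p, |g p.1 - g p.2| ∂(π ⊗ₘ K) := by
  have hco := conductance_mul_lintegral_le (K := K) hg.measurable g0 hsupp
  have hflow : ∫⁻ p, ENNReal.ofReal (g p.1 - g p.2) ∂(π ⊗ₘ K)
      = ENNReal.ofReal (∫ p, (g p.1 - g p.2)⁺ ∂(π ⊗ₘ K)) := by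
    rw [ofReal_integral_eq_lintegral_ofReal (BoundedMeasurable.integrable (by fun_prop))
      (.of_forall fun _ => posPart_nonneg _)]
    simp [posPart]
  rw [← ofReal_integral_eq_lintegral_ofReal hg.integrable (.of_forall g0), hflow,
    ← ENNReal.ofReal_mul conductance_nonneg,
    ENNReal.ofReal_le_ofReal_iff (integral_nonneg fun _ => posPart_nonneg _)] at hco
  have hswap : ∫ p, (g p.2 - g p.1)⁺ ∂(π ⊗ₘ K) = ∫ p, (g p.1 - g p.2)⁺ ∂(π ⊗ₘ K) :=
    hrev.integral_comp_swap fun p => (g p.1 - g p.2)⁺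
  simp (disch := exact BoundedMeasurable.integrable (by fun_prop)) only
    [abs_eq_posPart_add_posPart_neg, neg_sub, integral_add]
  linarith

lemma Reversible.sq_conductance_mul_integral_sq_le [IsFiniteMeasure π] (hrev : Reversible K π)
    (hg : BoundedMeasurable g) (g0 : ∀ x, 0 ≤ g x) (hsupp : π {x | 0 < g x} ≤ 1 / 2) :
    conductance K π ^ 2 * ∫ x, g x ^ 2 ∂π ≤ ∫ p, (g p.1 - g p.2) ^ 2 ∂(π ⊗ₘ K) := by
  set φ := conductance K π
  set N := ∫ x, g x ^ 2 ∂π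
  set E := ∫ p, (g p.1 - g p.2) ^ 2 ∂(π ⊗ₘ K)
  have hco : 2 * φ * N ≤ ∫ p, |g p.1 ^ 2 - g p.2 ^ 2| ∂(π ⊗ₘ K) :=
    hrev.two_mul_conductance_mul_integral_le (g := fun x => g x ^ 2) (by fun_prop)
      (fun x => sq_nonneg _) ((measure_mono fun x (hx : 0 < g x ^ 2) =>
        (g0 x).lt_of_ne fun h => by simp [← h] at hx).trans hsupp)
  have hfactor : ∀ p : Ω × Ω, |g p.1 ^ 2 - g p.2 ^ 2| = |g p.1 - g p.2| * (g p.1 + g p.2) :=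
    fun p => by rw [sq_sub_sq, abs_mul, abs_of_nonneg (add_nonneg (g0 _) (g0 _)), mul_comm]
  have hcs := sq_integral_mul_le (π ⊗ₘ K) (f := fun p => |g p.1 - g p.2|)
    (g := fun p => g p.1 + g p.2) (by fun_prop) (by fun_prop)
  simp only [sq_abs, ← hfactor] at hcs
  have hsum : ∫ p, (g p.1 + g p.2) ^ 2 ∂(π ⊗ₘ K) ≤ 4 * N := by
    have hpt : ∀ p : Ω × Ω, (g p.1 + g p.2) ^ 2 ≤ 2 * g p.1 ^ 2 + 2 * g p.2 ^ 2 :=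
      fun p => by nlinarith [sq_nonneg (g p.1 - g p.2)]
    have h := integral_mono (μ := π ⊗ₘ K) (BoundedMeasurable.integrable (by fun_prop))
      (BoundedMeasurable.integrable (by fun_prop)) hpt
    simp (disch := exact BoundedMeasurable.integrable (by fun_prop)) only
      [integral_add, integral_const_mul] at h
    rw [integral_compProd_fst (f := fun x => g x ^ 2) (by fun_prop),
      hrev.integral_compProd_snd (f := fun x => g x ^ 2) (by fun_prop)] at h
    linarith
  have hE : 0 ≤ E := integral_nonneg fun _ => sq_nonneg _
  have hN : 0 ≤ N := integral_nonneg fun _ => sq_nonneg _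
  have hφN : 0 ≤ 2 * φ * N := mul_nonneg (mul_nonneg zero_le_two conductance_nonneg) hN
  have key : φ ^ 2 * N * N ≤ E * N := by
    nlinarith [pow_le_pow_left₀ hφN hco 2, mul_le_mul_of_nonneg_left hsum hE]
  rcases hN.eq_or_lt with h | h
  · simpa [← h] using hE
  · exact le_of_mul_le_mul_right key h

/-- Cut `f` at a median `c` and apply Cheeger's inequality to `(f - c)⁺` and `(c - f)⁺`. -/
lemma Reversible.integral_markovOp_mul_self_le [IsProbabilityMeasure π] (hrev : Reversible K π)
    (hf : BoundedMeasurable f) (hf0 : ∫ x, f x ∂π = 0) :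
    ∫ x, markovOp K f x * f x ∂π ≤ (1 - conductance K π ^ 2 / 2) * ∫ x, f x ^ 2 ∂π := by
  have := Measure.isProbabilityMeasure_map (μ := π) hf.measurable.aemeasurable
  obtain ⟨c, hc₁, hc₂⟩ := exists_median (π.map f)
  rw [Measure.map_apply hf.measurable measurableSet_Ioi] at hc₁
  rw [Measure.map_apply hf.measurable measurableSet_Iio] at hc₂
  have h₁ := hrev.sq_conductance_mul_integral_sq_le (g := fun x => (f x - c)⁺) (by fun_prop)
    (fun _ => posPart_nonneg _) (by convert hc₁ using 2; ext; simp [posPart_pos_iff])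
  have h₂ := hrev.sq_conductance_mul_integral_sq_le (g := fun x => (c - f x)⁺) (by fun_prop)
    (fun _ => posPart_nonneg _) (by convert hc₂ using 2; ext; simp [posPart_pos_iff])
  have hpt (p : Ω × Ω) := sq_posPart_sub_posPart_add_le (f p.1) (f p.2) c
  have hE := integral_mono (μ := π ⊗ₘ K) (BoundedMeasurable.integrable (by fun_prop))
    (BoundedMeasurable.integrable (by fun_prop)) hpt
  rw [integral_add (BoundedMeasurable.integrable (by fun_prop))
    (BoundedMeasurable.integrable (by fun_prop)), hrev.integral_sq_sub hf] at hE
  have hN : ∫ x, (f x - c)⁺ ^ 2 ∂π + ∫ x, (c - f x)⁺ ^ 2 ∂π = ∫ x, f x ^ 2 ∂π + c ^ 2 := by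
    have hexp : ∀ x, (f x - c) ^ 2 = f x ^ 2 - 2 * c * f x + c ^ 2 := fun x => by ring
    rw [← integral_add (BoundedMeasurable.integrable (by fun_prop))
      (BoundedMeasurable.integrable (by fun_prop))]
    simp (disch := exact BoundedMeasurable.integrable (by fun_prop)) only
      [sq_posPart_sub_add_sq_posPart_sub, hexp, integral_add, integral_sub, integral_const_mul,
        hf0, integral_const, probReal_univ, smul_eq_mul, one_mul]
    ring
  nlinarith [mul_nonneg (sq_nonneg (conductance K π)) (sq_nonneg c)]

/-- `‖P f‖⁴ = ⟨P f, P f⟩² ≤ ⟨P f, f⟩ ⟨P (P f), P f⟩ ≤ λ² ‖f‖² ‖P f‖²`. -/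
lemma Lazy.integral_sq_markovOp_le_of_integral_eq_zero [IsProbabilityMeasure π] (hK : Lazy K)
    (hrev : Reversible K π) (hf : BoundedMeasurable f) (hf0 : ∫ x, f x ∂π = 0) :
    ∫ x, markovOp K f x ^ 2 ∂π ≤ (1 - conductance K π ^ 2 / 2) ^ 2 * ∫ x, f x ^ 2 ∂π := by
  have hPf0 : ∫ x, markovOp K f x ∂π = 0 := (hrev.integral_markovOp hf).trans hf0
  have h₁ := hrev.integral_markovOp_mul_self_le hf hf0
  have h₂ := hrev.integral_markovOp_mul_self_le (hf.markovOp (K := K)) hPf0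
  have hS₁ := hK.integral_markovOp_mul_self_nonneg hrev hf
  have hS₂ := hK.integral_markovOp_mul_self_nonneg hrev (hf.markovOp (K := K))
  have hcs := hK.sq_integral_markovOp_mul_le hrev hf (hf.markovOp (K := K))
  simp only [← sq] at hcs
  set Q := ∫ x, markovOp K f x ^ 2 ∂π
  have key : Q * Q ≤ ((1 - conductance K π ^ 2 / 2) ^ 2 * ∫ x, f x ^ 2 ∂π) * Q := by
    nlinarith [mul_le_mul h₁ h₂ hS₂ (hS₁.trans h₁)]
  have hQ : 0 ≤ Q := integral_nonneg fun _ => sq_nonneg _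
  rcases hQ.eq_or_lt with h | h
  · rw [← h]
    exact mul_nonneg (sq_nonneg _) (integral_nonneg fun _ => sq_nonneg _)
  · exact le_of_mul_le_mul_right key h

lemma Lazy.integral_sq_iterate_markovOp_le [IsProbabilityMeasure π] (hK : Lazy K)
    (hrev : Reversible K π) (hf : BoundedMeasurable f) (hf0 : ∫ x, f x ∂π = 0) (n : ℕ) :
    ∫ x, (markovOp K)^[n] f x ^ 2 ∂π
      ≤ ((1 - conductance K π ^ 2 / 2) ^ n) ^ 2 * ∫ x, f x ^ 2 ∂π := by
  induction n generalizing f with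
  | zero => simp
  | succ n ih =>
    rw [Function.iterate_succ_apply]
    calc _ ≤ ((1 - conductance K π ^ 2 / 2) ^ n) ^ 2 * ∫ x, markovOp K f x ^ 2 ∂π :=
          ih hf.markovOp ((hrev.integral_markovOp hf).trans hf0)
      _ ≤ ((1 - conductance K π ^ 2 / 2) ^ n) ^ 2
            * ((1 - conductance K π ^ 2 / 2) ^ 2 * ∫ x, f x ^ 2 ∂π) := by
          gcongr
          exact hK.integral_sq_markovOp_le_of_integral_eq_zero hrev hf hf0
      _ = _ := by ring

lemma Lazy.abs_integral_mul_iterate_sub_le [IsProbabilityMeasure π] (hK : Lazy K)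
    (hrev : Reversible K π) {ρ : Ω → ℝ} (hρ : BoundedMeasurable ρ) (hρ1 : ∫ x, ρ x ∂π = 1)
    {V : ℝ} (hV : ∫ x, (ρ x - 1) ^ 2 ∂π ≤ V) {A : Set Ω} (hA : MeasurableSet A) (n : ℕ) :
    |∫ x, ρ x * (markovOp K)^[n] (A.indicator 1) x ∂π - (π A).toReal|
      ≤ √V * (1 - conductance K π ^ 2 / 2) ^ n := by
  set u : Ω → ℝ := A.indicator 1
  have hu : BoundedMeasurable u := .indicator_one hA
  have hdiff := hrev.integral_mul_iterate_markovOp_sub hρ hu n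
  rw [integral_indicator_one hA, measureReal_def] at hdiff
  have hu2 : ∫ x, u x ^ 2 ∂π ≤ 1 := by
    have hpt : ∀ x, u x ^ 2 = u x := fun x => by by_cases hx : x ∈ A <;> simp [u, hx]
    calc ∫ x, u x ^ 2 ∂π = ∫ x, u x ∂π := integral_congr_ae (.of_forall hpt)
      _ = π.real A := integral_indicator_one hA
      _ ≤ 1 := measureReal_le_one
  have hρ0 : ∫ x, (ρ x - 1) ∂π = 0 := by
    rw [integral_sub hρ.integrable (integrable_const 1), hρ1]
    simp
  have hcontr := hK.integral_sq_iterate_markovOp_le hrev (by fun_prop) hρ0 n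
  have hrate : 0 ≤ 1 - conductance K π ^ 2 / 2 := by
    nlinarith [conductance_le_one (K := K) (π := π), conductance_nonneg (K := K) (π := π)]
  have hsq : (∫ x, (markovOp K)^[n] (fun y => ρ y - 1) x * u x ∂π) ^ 2
      ≤ (∫ x, (ρ x - 1) ^ 2 ∂π) * ((1 - conductance K π ^ 2 / 2) ^ n) ^ 2 :=
    calc _ ≤ (∫ x, (markovOp K)^[n] (fun y => ρ y - 1) x ^ 2 ∂π) * ∫ x, u x ^ 2 ∂π :=
          sq_integral_mul_le π ((hρ.sub (.const 1)).iterate_markovOp n) hu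
      _ ≤ ((1 - conductance K π ^ 2 / 2) ^ n) ^ 2 * ∫ x, (ρ x - 1) ^ 2 ∂π :=
          (mul_le_of_le_one_right (integral_nonneg fun _ => sq_nonneg _) hu2).trans hcontr
      _ = _ := mul_comm _ _
  calc _ ≤ √(∫ x, (ρ x - 1) ^ 2 ∂π) * (1 - conductance K π ^ 2 / 2) ^ n := by
        rw [hdiff, ← Real.sqrt_sq (pow_nonneg hrate n),
          ← Real.sqrt_mul (integral_nonneg fun _ => sq_nonneg _)]
        exact Real.abs_le_sqrt hsq
    _ ≤ √V * (1 - conductance K π ^ 2 / 2) ^ n := by gcongr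

end SpectralGap

instance isMarkovKernel_kpow {Ω : Type*} [MeasurableSpace Ω] (K : Kernel Ω Ω) [IsMarkovKernel K]
    (n : ℕ) : IsMarkovKernel (Kpow K n) := by
  induction n with
  | zero => rw [Kpow]; infer_instance
  | succ n ih => rw [Kpow]; infer_instance

lemma toReal_kpow_apply {Ω : Type*} [MeasurableSpace Ω] {K : Kernel Ω Ω} [IsMarkovKernel K]
    {A : Set Ω} (hA : MeasurableSet A) (n : ℕ) (x : Ω) :
    (Kpow K n x A).toReal = (markovOp K)^[n] (A.indicator 1) x := by
  induction n generalizing x with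
  | zero => by_cases hx : x ∈ A <;> simp [Kpow, Kernel.id_apply, Measure.dirac_apply' _ hA, hx]
  | succ n ih =>
    rw [Kpow, Kernel.comp_apply' _ _ _ hA, Function.iterate_succ_apply', ← integral_toReal
      (Kernel.measurable_coe _ hA).aemeasurable (.of_forall fun _ => measure_lt_top _ _)]
    simp only [ih, markovOp]

lemma integral_sq_sub_one_le {Ω : Type*} [MeasurableSpace Ω] {π : Measure Ω}
    [IsProbabilityMeasure π] {ρ : Ω → ℝ} (hρ : BoundedMeasurable ρ) (h0 : ∀ x, 0 ≤ ρ x)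
    {M : ℝ} (hM : ∀ x, ρ x ≤ M) (h1 : ∫ x, ρ x ∂π = 1) : ∫ x, (ρ x - 1) ^ 2 ∂π ≤ M - 1 := by
  have hpt : ∀ x, (ρ x - 1) ^ 2 ≤ M * ρ x - 2 * ρ x + 1 := fun x => by
    nlinarith [mul_le_mul_of_nonneg_left (hM x) (h0 x)]
  have h := integral_mono (μ := π) (BoundedMeasurable.integrable (by fun_prop))
    (BoundedMeasurable.integrable (by fun_prop)) hpt
  simp (disch := exact BoundedMeasurable.integrable (by fun_prop)) only
    [integral_add, integral_sub, integral_const_mul, integral_const, probReal_univ, smul_eq_mul,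
      one_mul, h1] at h
  linarith

theorem stmt10_general {Ω : Type*} [MeasurableSpace Ω]
    (K : Kernel Ω Ω) [IsMarkovKernel K]
    (π : Measure Ω) [IsProbabilityMeasure π]
    (hlazy : Lazy K) (hrev : Reversible K π)
    (ν : Measure Ω) [IsProbabilityMeasure ν]
    (d : Ω → ENNReal) (hd : Measurable d) (hν : ν = π.withDensity d)
    (M : ℝ) (hM : ∀ x, d x ≤ ENNReal.ofReal M)
    (A : Set Ω) (hA : MeasurableSet A) (j : ℕ) :
    |∫ x, (Kpow K j x A).toReal ∂ν - (π A).toReal|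
      ≤ Real.sqrt M * (1 - conductance K π ^ 2 / 2) ^ j := by
  have hM1 : 1 ≤ M := by
    have h : ν univ ≤ ENNReal.ofReal M := by
      rw [hν, withDensity_apply _ .univ, Measure.restrict_univ]
      exact (lintegral_mono hM).trans_eq (by simp)
    rwa [measure_univ, ENNReal.one_le_ofReal] at h
  set ρ : Ω → ℝ := fun x => (d x).toReal
  have hρM : ∀ x, ρ x ≤ M := fun x => ENNReal.toReal_le_of_le_ofReal (by linarith) (hM x)
  have hρ : BoundedMeasurable ρ :=
    ⟨hd.ennreal_toReal, M, fun x => (abs_of_nonneg ENNReal.toReal_nonneg).trans_le (hρM x)⟩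
  have hνρ : ∀ g : Ω → ℝ, ∫ x, g x ∂ν = ∫ x, ρ x * g x ∂π := fun g => by
    rw [hν, integral_withDensity_eq_integral_toReal_smul hd
      (.of_forall fun x => (hM x).trans_lt ENNReal.ofReal_lt_top)]
    rfl
  have hρ1 : ∫ x, ρ x ∂π = 1 := by simpa using (hνρ fun _ => 1).symm
  have hvar := integral_sq_sub_one_le hρ (fun _ => ENNReal.toReal_nonneg) hρM hρ1
  simp only [hνρ, toReal_kpow_apply hA]
  exact hlazy.abs_integral_mul_iterate_sub_le hrev hρ hρ1 (hvar.trans (by linarith)) hA j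

theorem stmt10 {Ω : Type*} [MeasurableSpace Ω] [MeasurableSingletonClass Ω]
    (K : Kernel Ω Ω) [IsMarkovKernel K]
    (π : Measure Ω) [IsProbabilityMeasure π]
    (hlazy : Lazy K) (hrev : Reversible K π)
    (ν : Measure Ω) [IsProbabilityMeasure ν]
    (d : Ω → ENNReal) (hd : Measurable d) (hν : ν = π.withDensity d)
    (M : ℝ) (hM : ∀ x, d x ≤ ENNReal.ofReal M)
    (A : Set Ω) (hA : MeasurableSet A) (j : ℕ) :
    |∫ x, (Kpow K j x A).toReal ∂ν - (π A).toReal|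
      ≤ Real.sqrt M * (1 - conductance K π ^ 2 / 2) ^ j :=
  stmt10_general K π hlazy hrev ν d hd hν M hM A hA j
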